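/- arXiv:0912.4443 — 9 statements merged into one kernel-verified Lean document; each statement's English description precedes it below -/
import Mathlib

section
/- Let G be a permutation group acting on [n]. The orbit condition is sufficient for the G-Marriage Problem (i.e., for every system V of subsets of [n], if G satisfies the orbit condition subject to V then G has a G-marriage subject to V) if and only if G is a direct product of symmetric groups, i.e., there exists a partition of [n] into disjoint nonempty sets Ω_1,...,Ω_m such that G = {σ ∈ Sym([n]) : σ(Ω_i) = Ω_i for all i = 1,...,m}. -/
/-- `G` has a `G`-marriage subject to `V`: some `g ∈ G` satisfies `g i ∈ V i` for all `i`. -/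
def hasMarriage {n : ℕ} (G : Subgroup (Equiv.Perm (Fin n))) (V : Fin n → Set (Fin n)) : Prop :=
  ∃ g ∈ G, ∀ i, g i ∈ V i

/-- The orbit condition: for every nonempty `Y ⊆ [n]` there is `g ∈ G` with `Y^g ⊆ ⋃_{y ∈ Y} V y`. -/
def orbitCondition {n : ℕ} (G : Subgroup (Equiv.Perm (Fin n))) (V : Fin n → Set (Fin n)) : Prop :=
  ∀ Y : Set (Fin n), Y.Nonempty → ∃ g ∈ G, (⇑g) '' Y ⊆ ⋃ y ∈ Y, V y

/-- The `k`-orbit condition: for every nonempty set `Y` of `k`-tuples there is `g ∈ G` such that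
`Y^g ⊆ ⋃_{y ∈ Y} V_{y 0} × ⋯ × V_{y (k-1)}`. -/
def kOrbitCondition {n : ℕ} (k : ℕ) (G : Subgroup (Equiv.Perm (Fin n))) (V : Fin n → Set (Fin n)) : Prop :=
  ∀ Y : Set (Fin k → Fin n), Y.Nonempty →
    ∃ g ∈ G, ∀ y ∈ Y, ∃ z ∈ Y, ∀ j, g (y j) ∈ V (z j)

/-!
If the orbit condition suffices for `G`, then `G` realises every exchange
`Y ↦ insert b (Y.erase a)` with `a ∈ Y`, `b ∉ Y` in one orbit. By induction on `#Y`: were it to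
fail for `Y`, the system `exchangeSystem` would satisfy the orbit condition, and each of its
marriages stabilises `Y`, fixes `b` and sends a prescribed `w ∈ Y` to `a`; the same holds with
`(Y, a, b)` replaced by `(insert b (Y.erase a), b, a)`, and composing two such elements realises
the exchange after all. Chaining exchanges, any `σ` preserving the orbits satisfies the orbit
condition for the system `i ↦ {σ i}`, whose only marriage is `σ`, so `σ ∈ G`.
Conversely, if `G` is the stabiliser of a partition, the orbit condition applied to each block of
a set yields Hall's condition for the system cut down to the blocks.
-/

open scoped Pointwise

theorem Finset.card_insert_erase_of_mem_of_notMem {α : Type*} [DecidableEq α] {s : Finset α}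
    {a b : α} (ha : a ∈ s) (hb : b ∉ s) : (insert b (s.erase a)).card = s.card := by
  rw [Finset.card_insert_of_notMem (fun h => hb (Finset.mem_of_mem_erase h)),
    Finset.card_erase_add_one ha]

theorem Equiv.Perm.smul_finset_erase {α : Type*} [DecidableEq α] (g : Equiv.Perm α)
    (s : Finset α) (x : α) : g • s.erase x = (g • s).erase (g x) :=
  Finset.image_erase g.injective s x

theorem Equiv.Perm.forall_image_setOf_eq_iff {α ι : Type*} (σ : Equiv.Perm α) (p : α → ι) :
    (∀ i, σ '' {x | p x = i} = {x | p x = i}) ↔ ∀ x, p (σ x) = p x := by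
  refine ⟨fun h x => ?_, fun h i => ?_⟩
  · have hx : σ x ∈ σ '' {y | p y = p x} := Set.mem_image_of_mem σ rfl
    rwa [h (p x)] at hx
  · conv_rhs => rw [← σ.image_preimage {x | p x = i}]
    simp [h]

section
variable {n : ℕ} {G : Subgroup (Equiv.Perm (Fin n))}

def OrbitConditionSufficient (G : Subgroup (Equiv.Perm (Fin n))) : Prop :=
  ∀ V : Fin n → Set (Fin n), orbitCondition G V → hasMarriage G V

def exchangeSystem (Y : Finset (Fin n)) (a b y₀ : Fin n) (i : Fin n) : Set (Fin n) :=
  {x | if i ∈ Y then x ∈ insert b (Y.erase a) ∨ i = y₀ ∧ x = a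
    else x ∉ insert b (Y.erase a) ∨ i = b ∧ x = b}

variable {Y : Finset (Fin n)} {a b y₀ : Fin n}

theorem orbitCondition_exchangeSystem (ha : a ∈ Y) (hb : b ∉ Y) (hy₀ : y₀ ∈ Y)
    (hsub : ∀ W ⊂ Y, a ∈ W → ∃ g ∈ G, g • W = insert b (W.erase a)) :
    orbitCondition G (exchangeSystem Y a b y₀) := by
  have hab : a ≠ b := fun h => hb (h ▸ ha)
  have hself : ∀ x ≠ a, x ∈ exchangeSystem Y a b y₀ x := by
    intro x hxa
    by_cases hxY : x ∈ Y <;> by_cases hxb : x = b <;> simp [exchangeSystem, *]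
  have hinY : ∀ i ∈ Y, ↑(insert b (Y.erase a)) ⊆ exchangeSystem Y a b y₀ i := by
    intro i hi x hx
    simp only [exchangeSystem, Set.mem_ofPred_eq, if_pos hi]
    exact Or.inl hx
  have ha_y₀ : a ∈ exchangeSystem Y a b y₀ y₀ := by simp [exchangeSystem, hy₀]
  have ha_out : ∀ i ∉ Y, a ∈ exchangeSystem Y a b y₀ i := by
    intro i hi
    simp [exchangeSystem, hi, hab]
  intro W _
  obtain ⟨W, rfl⟩ := W.toFinite.exists_finset_coe
  by_cases hW : a ∈ W ∧ y₀ ∉ W ∧ W ⊆ Y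
  · obtain ⟨haW, hy₀W, hWY⟩ := hW
    obtain ⟨g, hg, hgW⟩ := hsub W (hWY.ssubset_of_ne (by rintro rfl; exact hy₀W hy₀)) haW
    refine ⟨g, hg, ?_⟩
    rintro _ ⟨w, hw, rfl⟩
    have hgw : g w ∈ insert b (W.erase a) := hgW ▸ Finset.smul_mem_smul_finset hw
    exact Set.mem_biUnion hw
      (hinY w (hWY hw) (Finset.insert_subset_insert b (Finset.erase_subset_erase a hWY) hgw))
  · refine ⟨1, G.one_mem, ?_⟩
    rintro _ ⟨x, hx, rfl⟩
    by_cases hxa : x = a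
    · subst hxa
      by_cases hy₀W : y₀ ∈ W
      · exact Set.mem_biUnion hy₀W ha_y₀
      · obtain ⟨w, hwW, hwY⟩ := Finset.not_subset.mp (by tauto : ¬ W ⊆ Y)
        exact Set.mem_biUnion hwW (ha_out w hwY)
    · exact Set.mem_biUnion hx (hself x hxa)

theorem eq_or_stabilizes_of_mem_exchangeSystem (ha : a ∈ Y) (hb : b ∉ Y)
    {g : Equiv.Perm (Fin n)} (hg : ∀ i, g i ∈ exchangeSystem Y a b y₀ i) :
    g • Y = insert b (Y.erase a) ∨ g • Y = Y ∧ g b = b ∧ g y₀ = a := by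
  set Z := insert b (Y.erase a)
  have hcard : (g • Y).card = Z.card := by
    rw [Finset.card_smul_finset, Finset.card_insert_erase_of_mem_of_notMem ha hb]
  have hY : ∀ i ∈ Y, g i ∈ Z ∨ i = y₀ ∧ g i = a := fun i hi => by
    simpa only [exchangeSystem, Set.mem_ofPred_eq, if_pos hi] using hg i
  have hYc : ∀ i ∉ Y, g i ∉ Z ∨ i = b ∧ g i = b := fun i hi => by
    simpa only [exchangeSystem, Set.mem_ofPred_eq, if_neg hi] using hg i
  -- If `g y₀ ≠ a` then `g` maps `Y` into `Z`; if `g b ≠ b` then only points of `Y` reach `Z`.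
  -- Either way `g • Y = Z`, as both have the same size.
  by_cases hy₀ : g y₀ = a
  swap
  · refine Or.inl (Finset.eq_of_subset_of_card_le (fun x hx => ?_) hcard.ge)
    obtain ⟨i, hi, rfl⟩ := Finset.mem_smul_finset.mp hx
    exact (hY i hi).resolve_right fun ⟨hiy₀, hia⟩ => hy₀ (hiy₀ ▸ hia)
  by_cases hgb : g b = b
  swap
  · refine Or.inl (Finset.eq_of_subset_of_card_le (fun x hx => ?_) hcard.le).symm
    have hi : g⁻¹ x ∈ Y := by
      by_contra hi
      rcases hYc _ hi with h | ⟨rfl, h⟩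
      · exact h (by simpa using hx)
      · exact hgb (by simpa using h)
    simpa using Finset.smul_mem_smul_finset (a := g) hi
  refine Or.inr ⟨Finset.eq_of_subset_of_card_le (fun x hx => ?_) ?_, hgb, hy₀⟩
  · obtain ⟨i, hi, rfl⟩ := Finset.mem_smul_finset.mp hx
    rcases hY i hi with h | ⟨-, h⟩
    · rcases Finset.mem_insert.mp h with h | h
      · exact absurd (g.injective (h.trans hgb.symm) ▸ hi) hb
      · exact Finset.mem_of_mem_erase h
    · rw [Equiv.Perm.smul_def, h]
      exact ha
  · rw [Finset.card_smul_finset]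

theorem OrbitConditionSufficient.exists_stabilizer_of_not_exists_smul_eq
    (hG : OrbitConditionSufficient G) (ha : a ∈ Y) (hb : b ∉ Y) (hy₀ : y₀ ∈ Y)
    (hsub : ∀ W ⊂ Y, a ∈ W → ∃ g ∈ G, g • W = insert b (W.erase a))
    (hY : ¬∃ g ∈ G, g • Y = insert b (Y.erase a)) :
    ∃ g ∈ G, g • Y = Y ∧ g b = b ∧ g y₀ = a := by
  obtain ⟨g, hg, hgV⟩ := hG _ (orbitCondition_exchangeSystem ha hb hy₀ hsub)
  exact ⟨g, hg,
    (eq_or_stabilizes_of_mem_exchangeSystem ha hb hgV).resolve_left fun h => hY ⟨g, hg, h⟩⟩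

theorem OrbitConditionSufficient.exists_smul_eq_insert_erase (hG : OrbitConditionSufficient G)
    (ha : a ∈ Y) (hb : b ∉ Y) (hab : ∃ g ∈ G, g a = b) :
    ∃ g ∈ G, g • Y = insert b (Y.erase a) := by
  induction hk : Y.card using Nat.strong_induction_on generalizing Y a b with
  | _ k IH =>
  by_contra hY
  obtain ⟨w, hwY, hwa⟩ : ∃ w ∈ Y, w ≠ a := by
    by_contra! h
    obtain ⟨g, hg, rfl⟩ := hab
    rw [Finset.eq_singleton_iff_unique_mem.mpr ⟨ha, h⟩] at hY
    exact hY ⟨g, hg, by simp⟩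
  have hba : ∃ g ∈ G, g b = a := by
    obtain ⟨g, hg, rfl⟩ := hab
    exact ⟨g⁻¹, inv_mem hg, by simp⟩
  set Z := insert b (Y.erase a)
  have hbZ : b ∈ Z := Finset.mem_insert_self b _
  have haZ : a ∉ Z := by simp [Z, show a ≠ b by rintro rfl; exact hb ha]
  have hwZ : w ∈ Z := Finset.mem_insert_of_mem (Finset.mem_erase.mpr ⟨hwa, hwY⟩)
  have hZY : insert a (Z.erase b) = Y := by
    rw [Finset.erase_insert (fun h => hb (Finset.mem_of_mem_erase h)), Finset.insert_erase ha]
  have hZcard : Z.card = k := (Finset.card_insert_erase_of_mem_of_notMem ha hb).trans hk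
  obtain ⟨t, ht, htY, htb, htw⟩ := hG.exists_stabilizer_of_not_exists_smul_eq ha hb hwY
    (fun W hW haW => IH _ (hk ▸ Finset.card_lt_card hW) haW (fun h => hb (hW.subset h)) hab rfl)
    hY
  obtain ⟨t', ht', htZ, hta, htw'⟩ := hG.exists_stabilizer_of_not_exists_smul_eq hbZ haZ hwZ
    (fun W hW hbW =>
      IH _ (hZcard ▸ Finset.card_lt_card hW) hbW (fun h => haZ (hW.subset h)) hba rfl)
    (by
      rw [hZY]
      rintro ⟨g, hg, hgZ⟩
      exact hY ⟨g⁻¹, inv_mem hg, by rw [← hgZ, inv_smul_smul]⟩)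
  -- `t` and `t'` carry this common set to `Z` and to `Y` respectively.
  have hS : insert b (Y.erase w) = insert a (Z.erase w) := by
    ext x
    simp only [Z, Finset.mem_insert, Finset.mem_erase]
    grind
  have htS : t • insert b (Y.erase w) = Z := by
    rw [Finset.smul_finset_insert, Equiv.Perm.smul_finset_erase, htY, htw, Equiv.Perm.smul_def, htb]
  have ht'S : t' • insert b (Y.erase w) = Y := by
    rw [hS, Finset.smul_finset_insert, Equiv.Perm.smul_finset_erase, htZ, htw', Equiv.Perm.smul_def,
      hta, hZY]
  exact hY ⟨t * t'⁻¹, mul_mem ht (inv_mem ht'), by rw [mul_smul, ← ht'S, inv_smul_smul, htS]⟩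

theorem OrbitConditionSufficient.exists_smul_eq_smul (hG : OrbitConditionSufficient G)
    {σ : Equiv.Perm (Fin n)} (hσ : ∀ x, ∃ g ∈ G, g x = σ x) (A : Finset (Fin n)) :
    ∃ g ∈ G, g • A = σ • A := by
  induction A using Finset.induction_on with
  | empty => exact ⟨1, G.one_mem, by simp⟩
  | insert x A hxA ih =>
    obtain ⟨g, hg, hgA⟩ := ih
    by_cases hx : g x = σ x
    · exact ⟨g, hg, by
      rw [Finset.smul_finset_insert, Finset.smul_finset_insert, hgA, Equiv.Perm.smul_def,
        Equiv.Perm.smul_def, hx]⟩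
    have hgx : g x ∉ σ • A := by
      rw [← hgA, ← Equiv.Perm.smul_def, Finset.smul_mem_smul_finset_iff]
      exact hxA
    have hσx : σ x ∉ insert (g x) (σ • A) := by
      rw [Finset.mem_insert, not_or, ← Equiv.Perm.smul_def, Finset.smul_mem_smul_finset_iff]
      exact ⟨Ne.symm hx, hxA⟩
    obtain ⟨h, hh, hhx⟩ := hσ x
    obtain ⟨k, hk, hkA⟩ := hG.exists_smul_eq_insert_erase (Finset.mem_insert_self _ _) hσx
      ⟨h * g⁻¹, mul_mem hh (inv_mem hg), by simp [hhx]⟩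
    refine ⟨k * g, mul_mem hk hg, ?_⟩
    rw [mul_smul, Finset.smul_finset_insert, hgA, Equiv.Perm.smul_def, hkA, Finset.erase_insert hgx,
      Finset.smul_finset_insert, Equiv.Perm.smul_def]

theorem OrbitConditionSufficient.mem_of_forall_exists_apply_eq
    (hG : OrbitConditionSufficient G) {σ : Equiv.Perm (Fin n)} (hσ : ∀ x, ∃ g ∈ G, g x = σ x) :
    σ ∈ G := by
  obtain ⟨g, hg, hgσ⟩ := hG (fun i => {σ i}) fun W _ => by
    obtain ⟨W, rfl⟩ := W.toFinite.exists_finset_coe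
    obtain ⟨g, hg, hgW⟩ := hG.exists_smul_eq_smul hσ W
    refine ⟨g, hg, ?_⟩
    rintro _ ⟨w, hw, rfl⟩
    obtain ⟨v, hv, hvw⟩ := Finset.mem_smul_finset.mp (hgW ▸ Finset.smul_mem_smul_finset hw)
    exact Set.mem_biUnion hv hvw.symm
  rwa [show g = σ from Equiv.ext hgσ] at hg

theorem OrbitConditionSufficient.exists_forall_mem_iff_apply_eq
    (hG : OrbitConditionSufficient G) :
    ∃ (m : ℕ) (p : Fin n → Fin m), Function.Surjective p ∧
      ∀ σ : Equiv.Perm (Fin n), σ ∈ G ↔ ∀ x, p (σ x) = p x := by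
  let e := Finite.equivFin (MulAction.orbitRel.Quotient G (Fin n))
  refine ⟨_, fun x => e (Quotient.mk _ x), e.surjective.comp Quotient.mk_surjective, fun σ => ?_⟩
  have key : ∀ x, e (Quotient.mk _ (σ x)) = e (Quotient.mk _ x) ↔ ∃ g ∈ G, g x = σ x := by
    intro x
    rw [e.apply_eq_iff_eq, Quotient.eq, MulAction.orbitRel_apply, MulAction.mem_orbit_iff]
    exact ⟨fun ⟨g, hg⟩ => ⟨g, g.2, hg⟩, fun ⟨g, hg, hgx⟩ => ⟨⟨g, hg⟩, hgx⟩⟩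
  exact ⟨fun hσ x => (key x).mpr ⟨σ, hσ, rfl⟩,
    fun h => hG.mem_of_forall_exists_apply_eq fun x => (key x).mp (h x)⟩

variable {ι : Type*}

open scoped Classical in
theorem card_le_card_biUnion_of_orbitCondition (p : Fin n → ι) (hp : ∀ g ∈ G, ∀ x, p (g x) = p x)
    {V : Fin n → Set (Fin n)} (hV : orbitCondition G V) (s : Finset (Fin n)) :
    s.card ≤ (s.biUnion fun x => {y | y ∈ V x ∧ p y = p x}).card := by
  set N := s.biUnion fun x => {y | y ∈ V x ∧ p y = p x}
  have hN : ∀ y ∈ N, p y ∈ s.image p := by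
    intro y hy
    obtain ⟨x, hx, hy⟩ := Finset.mem_biUnion.mp hy
    exact Finset.mem_image.mpr ⟨x, hx, (Finset.mem_filter.mp hy).2.2.symm⟩
  rw [Finset.card_eq_sum_card_fiberwise fun x hx => Finset.mem_image_of_mem p hx,
    Finset.card_eq_sum_card_fiberwise hN]
  refine Finset.sum_le_sum fun i _ => ?_
  obtain hs | hs := (s.filter (p · = i)).eq_empty_or_nonempty
  · simp [hs]
  obtain ⟨g, hg, hgV⟩ := hV _ (Finset.coe_nonempty.mpr hs)
  rw [← Finset.card_smul_finset g]
  refine Finset.card_le_card fun z hz => ?_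
  obtain ⟨x, hx, rfl⟩ := Finset.mem_smul_finset.mp hz
  obtain ⟨y, hy, hxy⟩ := Set.mem_iUnion₂.mp (hgV ⟨x, hx, rfl⟩)
  rw [Finset.mem_filter] at hx
  rw [Finset.mem_coe, Finset.mem_filter] at hy
  have hgx : p (g x) = i := (hp g hg x).trans hx.2
  rw [Equiv.Perm.smul_def, Finset.mem_filter, Finset.mem_biUnion]
  exact ⟨⟨y, hy.1, Finset.mem_filter.mpr ⟨Finset.mem_univ _, hxy, hgx.trans hy.2.symm⟩⟩, hgx⟩

theorem hasMarriage_of_forall_mem_iff_apply_eq (p : Fin n → ι)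
    (hG : ∀ σ, σ ∈ G ↔ ∀ x, p (σ x) = p x) {V : Fin n → Set (Fin n)}
    (hV : orbitCondition G V) : hasMarriage G V := by
  classical
  obtain ⟨f, hf, hfV⟩ := (Finset.all_card_le_biUnion_card_iff_exists_injective _).mp
    (card_le_card_biUnion_of_orbitCondition p (fun g hg => (hG g).mp hg) hV)
  simp only [Finset.mem_filter, Finset.mem_univ, true_and] at hfV
  let σ := Equiv.ofBijective f (Finite.injective_iff_bijective.mp hf)
  exact ⟨σ, (hG σ).mpr fun x => (hfV x).2, fun x => (hfV x).1⟩

end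

/-- The orbit condition is sufficient for the `G`-Marriage Problem iff `G` is a direct
product of symmetric groups, i.e. the group of all permutations stabilizing each part
of some partition of `[n]` into nonempty sets. -/
theorem stmt_1 (n : ℕ) (G : Subgroup (Equiv.Perm (Fin n))) :
    (∀ V : Fin n → Set (Fin n), orbitCondition G V → hasMarriage G V) ↔
      ∃ (m : ℕ) (Ω : Fin m → Set (Fin n)),
        (∀ i, (Ω i).Nonempty) ∧
        (∀ i j, i ≠ j → Disjoint (Ω i) (Ω j)) ∧
        (⋃ i, Ω i) = Set.univ ∧
        (∀ σ : Equiv.Perm (Fin n), σ ∈ G ↔ ∀ i, (⇑σ) '' Ω i = Ω i) := by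
  constructor
  · intro (hG : OrbitConditionSufficient G)
    obtain ⟨m, p, hp, hGp⟩ := hG.exists_forall_mem_iff_apply_eq
    refine ⟨m, fun i => {x | p x = i}, hp, fun i j hij => ?_, ?_, fun σ => ?_⟩
    · exact Set.disjoint_left.mpr fun x hi hj => hij (hi.symm.trans hj)
    · exact Set.eq_univ_of_forall fun x => Set.mem_iUnion.mpr ⟨p x, rfl⟩
    · exact (hGp σ).trans (σ.forall_image_setOf_eq_iff p).symm
  · rintro ⟨m, Ω, hne, hdisj, hcover, hGΩ⟩ V hV
    let P := IndexedPartition.mk' Ω (fun i j => hdisj i j) hne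
      fun x => Set.mem_iUnion.mp (hcover ▸ Set.mem_univ x)
    simp only [P.eq, Equiv.Perm.forall_image_setOf_eq_iff] at hGΩ
    exact hasMarriage_of_forall_mem_iff_apply_eq P.index hGΩ hV
end

section
/- Let n = 3 and let V be the system of subsets of [3] given by V_1 = {1,3}, V_2 = {2,3}, V_3 = {1,2}. Then the alternating group G = Alt([3]) (equivalently, the cyclic group generated by the 3-cycle (1 2 3)) satisfies the 2-orbit condition subject to V, but G does not have a G-marriage subject to V. -/
/-!
Reading indices in `ℤ/3`, the system is `V b = {a | a + b ≠ 1}` and `Alt([3])` consists of the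
translations `· + k`. A translation is a marriage iff `i + k + i ≠ 1` for all `i`, which fails
because `2` is invertible. For the `2`-orbit condition, suppose every translation `k` fails, with a
witness `w k ∈ Y` such that every `z ∈ Y` has a coordinate `j` with `w k j + z j = 1 - k`.
Comparing the witnesses for `k = 0, 1, -1` pairwise pins down their coordinate sums; then `w 0`
and `w 1` are constant tuples, and `w 0 + w 1` would have both `1` and `0` as a coordinate.
-/

lemma coord_sum_add_eq_of_ne {M : Type*} [AddCommMonoid M] {x y : Fin 2 → M} {a b : M}
    (hab : a ≠ b) (ha : ∃ j, x j + y j = a) (hb : ∃ j, x j + y j = b) :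
    x 0 + x 1 + (y 0 + y 1) = a + b := by
  rcases Fin.exists_fin_two.1 ha with rfl | rfl <;> rcases Fin.exists_fin_two.1 hb with rfl | rfl
  all_goals first | exact absurd rfl hab | abel

theorem exists_forall_exists_add_add_ne {F : Type*} [Field F] (h2 : (2 : F) ≠ 0) (r : F)
    (Y : Set (Fin 2 → F)) : ∃ k : F, ∀ y ∈ Y, ∃ z ∈ Y, ∀ j, y j + k + z j ≠ r := by
  by_contra! h
  choose w hwY hw using h
  have hpair : ∀ k k', ∃ j, w k j + w k' j = r - k := fun k k' =>
    (hw k _ (hwY k')).imp fun j hj => by linear_combination hj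
  have hsum : ∀ k k', k ≠ k' → w k 0 + w k 1 + (w k' 0 + w k' 1) = r - k + (r - k') :=
    fun k k' hkk' => coord_sum_add_eq_of_ne (by contrapose! hkk'; linear_combination -hkk')
      (hpair k k') ((hpair k' k).imp fun j hj => by rw [add_comm, hj])
  have e₁ := hsum 0 1 zero_ne_one
  have e₂ := hsum 0 (-1) (by simp)
  have e₃ := hsum 1 (-1) (by contrapose! h2; linear_combination h2)
  have hs₀ : w 0 0 + w 0 1 = r - 0 := mul_left_cancel₀ h2 (by linear_combination e₁ + e₂ - e₃)
  have hs₁ : w 1 0 + w 1 1 = r - 1 := mul_left_cancel₀ h2 (by linear_combination e₁ - e₂ + e₃)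
  have hconst : ∀ k, w k 0 + w k 1 = r - k → w k 1 = w k 0 := by
    intro k hk
    rcases Fin.exists_fin_two.1 (hpair k k) with hi | hi
    · linear_combination hk - hi
    · linear_combination hi - hk
  have hflat : ∀ j, w 0 j + w 1 j = w 0 0 + w 1 0 :=
    Fin.forall_fin_two.2 ⟨rfl, by rw [hconst 0 hs₀, hconst 1 hs₁]⟩
  obtain ⟨i, hi⟩ := hpair 0 1
  obtain ⟨j, hj⟩ := hpair 1 0
  rw [hflat] at hi
  rw [add_comm, hflat] at hj
  exact zero_ne_one (α := F) (by linear_combination hi - hj)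

theorem exists_add_add_eq {F : Type*} [Field F] (h2 : (2 : F) ≠ 0) (k r : F) :
    ∃ i, i + k + i = r :=
  ⟨(r - k) / 2, by field_simp; ring⟩

lemma mem_system_iff {a b : Fin 3} :
    a ∈ (![{0, 2}, {1, 2}, {0, 1}] : Fin 3 → Set (Fin 3)) b ↔ a + b ≠ 1 := by
  fin_cases a <;> fin_cases b <;> simp

lemma mem_alternatingGroup_fin_three_iff {g : Equiv.Perm (Fin 3)} :
    g ∈ alternatingGroup (Fin 3) ↔ ∃ k, g = Equiv.addRight k := by
  rw [Equiv.Perm.mem_alternatingGroup]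
  revert g
  decide

/-- Points are indexed from `0`, so `V₁ = {1,3}` of the paper is `{0, 2}` here. -/
theorem stmt_4 :
    kOrbitCondition 2 (alternatingGroup (Fin 3)) ![{0, 2}, {1, 2}, {0, 1}] ∧
      ¬ hasMarriage (alternatingGroup (Fin 3)) ![{0, 2}, {1, 2}, {0, 1}] := by
  -- `ZMod 3` is `Fin 3` by definition, so the field lemmas apply to `Fin 3` directly.
  have h2 : (2 : ZMod 3) ≠ 0 := by decide
  constructor
  · intro Y _
    obtain ⟨k, hk⟩ := exists_forall_exists_add_add_ne h2 1 Y
    refine ⟨Equiv.addRight k, mem_alternatingGroup_fin_three_iff.2 ⟨k, rfl⟩, fun y hy => ?_⟩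
    obtain ⟨z, hz, hyz⟩ := hk y hy
    exact ⟨z, hz, fun j => mem_system_iff.2 (hyz j)⟩
  · rintro ⟨g, hg, hmarriage⟩
    obtain ⟨k, rfl⟩ := mem_alternatingGroup_fin_three_iff.1 hg
    obtain ⟨i, hi⟩ := exists_add_add_eq h2 k 1
    exact mem_system_iff.1 (hmarriage i) hi
end

section
/- Let n ≥ 4 and let G be the cyclic subgroup of Sym([n]) generated by the n-cycle (1 2 ... n). For every system V of subsets V_1,...,V_n of [n], G satisfies the (n-1)-orbit condition subject to V if and only if G has a G-marriage subject to V. -/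
/-!
Identify `G` with the translations `x ↦ x + c` of `ℤ/n` and let `T a` be the `(n-1)`-tuple
listing every point except `a`. Suppose there is no marriage. The condition for `{T a}` gives a
shift `σ a` that works everywhere except at `a`; then `σ` is injective, so `V x` is everything but
`x + σ x`. The condition for `{T p, T q}` forces `σ q - σ p = 2 (p - q)`, i.e. `σ x = b - 2x`, so
`V x` is everything but `b - x` and doubling is bijective. Finally a shift `c` serving
`{0, T e, T (-e)}` would need `b - c ∈ {0, e, 2e} ∩ {0, -e, -2e}`, hence `b - c = 0` since
`2e, 3e, 4e ≠ 0`, and then the constant tuple `0` is served by no tuple of the set.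
-/

open Function

section ShiftOrbitCondition

variable {A ι ι' : Type*} [AddCommGroup A]

def ShiftMemBox (V : A → Set A) (c : A) (y z : ι → A) : Prop :=
  ∀ j, y j + c ∈ V (z j)

/-- The `k`-orbit condition for the regular action of `A` on itself, with `k`-tuples indexed
by `ι`. -/
def ShiftOrbitCondition (ι : Type*) (V : A → Set A) : Prop :=
  ∀ Y : Set (ι → A), Y.Nonempty → ∃ c, ∀ y ∈ Y, ∃ z ∈ Y, ShiftMemBox V c y z

theorem shiftOrbitCondition_of_forall_add_mem {V : A → Set A} {c : A} (hc : ∀ x, x + c ∈ V x) :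
    ShiftOrbitCondition ι V :=
  fun _ _ => ⟨c, fun y hy => ⟨y, hy, fun j => hc (y j)⟩⟩

theorem ShiftOrbitCondition.of_equiv {V : A → Set A} (e : ι ≃ ι')
    (h : ShiftOrbitCondition ι V) : ShiftOrbitCondition ι' V := by
  intro Y hY
  obtain ⟨c, hc⟩ := h ((· ∘ e) '' Y) (hY.image _)
  refine ⟨c, fun y hy => ?_⟩
  obtain ⟨_, ⟨z, hz, rfl⟩, hyz⟩ := hc (y ∘ e) ⟨y, hy, rfl⟩
  exact ⟨z, hz, fun j => by simpa using hyz (e.symm j)⟩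

/-- Lists every element of `A` except `a`, each exactly once. -/
def avoiding (a : A) : {j : A // j ≠ 0} → A :=
  fun j => a + j

theorem Function.Surjective.apply_eq_of_forall_avoiding_ne {B : Type*} {f : A → B}
    (hf : Surjective f) {a : A} {w : B} (h : ∀ j, f (avoiding a j) ≠ w) : f a = w := by
  obtain ⟨x, rfl⟩ := hf w
  by_contra hne
  exact h ⟨x - a, sub_ne_zero.2 fun hxa => hne (hxa ▸ rfl)⟩ (by simp [avoiding])

variable {V : A → Set A}

theorem ShiftOrbitCondition.exists_forall_ne (h : ShiftOrbitCondition {j : A // j ≠ 0} V)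
    (a : A) : ∃ c, ∀ x, x ≠ a → x + c ∈ V x := by
  obtain ⟨c, hc⟩ := h {avoiding a} (Set.singleton_nonempty _)
  obtain ⟨_, rfl, hac⟩ := hc _ rfl
  exact ⟨c, fun x hx => by simpa [avoiding] using hac ⟨x - a, sub_ne_zero.2 hx⟩⟩

theorem bijective_and_eq_compl_of_forall_ne [Finite A] {σ : A → A}
    (hno : ∀ c, ∃ x, x + c ∉ V x) (hσ : ∀ a x, x ≠ a → x + σ a ∈ V x) :
    Bijective σ ∧ ∀ x, V x = {x + σ x}ᶜ := by
  have hfail : ∀ a, a + σ a ∉ V a := by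
    intro a
    obtain ⟨x, hx⟩ := hno (σ a)
    rcases eq_or_ne x a with rfl | hxa
    exacts [hx, absurd (hσ a x hxa) hx]
  have hbij : Bijective σ := by
    refine Finite.injective_iff_bijective.1 fun a a' h => ?_
    by_contra hne
    exact hfail a' (h ▸ hσ a a' (Ne.symm hne))
  refine ⟨hbij, fun x => Set.ext fun w => ⟨fun hw hwx => hfail x (hwx ▸ hw), fun hwx => ?_⟩⟩
  obtain ⟨a, ha⟩ := hbij.2 (w - x)
  have hxa : x ≠ a := by
    rintro rfl
    exact hwx (by rw [Set.mem_singleton_iff, ha]; abel)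
  simpa [ha] using hσ a x hxa

theorem ShiftMemBox.eq_of_compl_add {σ : A → A} (hσ : Surjective σ) {a a' c : A}
    (h : ShiftMemBox (fun x => {x + σ x}ᶜ) c (avoiding a) (avoiding a')) : c = σ a' + a' - a := by
  have key := hσ.apply_eq_of_forall_avoiding_ne (a := a') (w := c + a - a') fun j hj =>
    h j (by simp only [avoiding, Set.mem_singleton_iff] at hj ⊢; rw [hj]; abel)
  rw [key]
  abel

theorem ShiftOrbitCondition.sub_eq_two_nsmul_of_compl_add {σ : A → A} (hσ : Bijective σ)
    (h : ShiftOrbitCondition {j : A // j ≠ 0} (fun x => {x + σ x}ᶜ)) {p q : A} (hpq : p ≠ q) :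
    σ q - σ p = 2 • (p - q) := by
  obtain ⟨c, hc⟩ := h {avoiding p, avoiding q} (Set.insert_nonempty _ _)
  simp only [Set.forall_mem_insert, Set.exists_mem_insert, Set.mem_singleton_iff, forall_eq,
    exists_eq_left] at hc
  obtain ⟨hp | hp, hq | hq⟩ := hc <;>
    replace hp := hp.eq_of_compl_add hσ.2 <;> replace hq := hq.eq_of_compl_add hσ.2
  · exact absurd (by linear_combination (norm := module) hp - hq) hpq
  · exact absurd (hσ.1 (by linear_combination (norm := module) hq - hp)) hpq
  · linear_combination (norm := module) hq - hp
  · exact absurd (by linear_combination (norm := module) hp - hq) hpq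

section ComplSub

variable {b c : A}

theorem ShiftMemBox.ne_of_zero_zero [Nonempty ι]
    (h : ShiftMemBox (fun x => {b - x}ᶜ) c (0 : ι → A) 0) : c ≠ b := by
  simpa using h (Classical.arbitrary ι)

theorem ShiftMemBox.eq_of_zero_avoiding {a : A}
    (h : ShiftMemBox (fun x => {b - x}ᶜ) c 0 (avoiding a)) : c = b - a := by
  have key := (Equiv.subLeft b).surjective.apply_eq_of_forall_avoiding_ne (a := a) (w := c)
    fun j hj => h j (by simp [← hj])
  rw [← key]
  rfl

theorem ShiftMemBox.eq_of_avoiding_zero {a : A}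
    (h : ShiftMemBox (fun x => {b - x}ᶜ) c (avoiding a) 0) : c = b - a := by
  have key := (Equiv.addRight c).surjective.apply_eq_of_forall_avoiding_ne (a := a) (w := b)
    fun j hj => h j (by simpa using hj)
  rw [← key]
  simp

theorem ShiftMemBox.eq_of_avoiding_avoiding (hd : Surjective fun x : A => 2 • x) {a a' : A}
    (h : ShiftMemBox (fun x => {b - x}ᶜ) c (avoiding a) (avoiding a')) : c = b - a - a' := by
  have key := hd.apply_eq_of_forall_avoiding_ne (a := a') (w := b - c - a + a') fun j hj =>
    h j (Set.mem_singleton_iff.2 (by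
      simp only [avoiding] at hj ⊢; linear_combination (norm := module) hj))
  linear_combination (norm := module) key

theorem not_shiftOrbitCondition_compl_sub (hd : Bijective fun x : A => 2 • x) {e : A}
    (he : 3 • e ≠ 0) : ¬ShiftOrbitCondition {j : A // j ≠ 0} (fun x => {b - x}ᶜ) := by
  intro h
  have he0 : e ≠ 0 := by
    rintro rfl
    simp at he
  have h2e : 2 • e ≠ 0 := fun h2 => he0 (hd.1 (by simpa using h2))
  have h4e : 4 • e ≠ 0 := fun h4 => h2e (hd.1 (by simpa [smul_smul] using h4))
  have : Nonempty {j : A // j ≠ 0} := ⟨⟨e, he0⟩⟩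
  obtain ⟨c, hc⟩ := h {0, avoiding e, avoiding (-e)} (Set.insert_nonempty _ _)
  simp only [Set.forall_mem_insert, Set.exists_mem_insert, Set.mem_singleton_iff, forall_eq,
    exists_eq_left] at hc
  obtain ⟨h0, hp, hn⟩ := hc
  replace h0 : c ≠ b ∨ c = b - e ∨ c = b - -e :=
    h0.imp (·.ne_of_zero_zero) (Or.imp (·.eq_of_zero_avoiding) (·.eq_of_zero_avoiding))
  replace hp : c = b - e ∨ c = b - e - e ∨ c = b - e - -e :=
    hp.imp (·.eq_of_avoiding_zero)
      (Or.imp (·.eq_of_avoiding_avoiding hd.2) (·.eq_of_avoiding_avoiding hd.2))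
  replace hn : c = b - -e ∨ c = b - -e - e ∨ c = b - -e - -e :=
    hn.imp (·.eq_of_avoiding_zero)
      (Or.imp (·.eq_of_avoiding_avoiding hd.2) (·.eq_of_avoiding_avoiding hd.2))
  -- `hp` and `hn` leave only `c = b` (using `2e, 3e, 4e ≠ 0`), which `h0` excludes as `e ≠ 0`.
  grind

end ComplSub

theorem not_shiftOrbitCondition_compl_add {σ : A → A} (hσ : Bijective σ) {e : A}
    (he : 3 • e ≠ 0) : ¬ShiftOrbitCondition {j : A // j ≠ 0} (fun x => {x + σ x}ᶜ) := by
  intro h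
  have hσ_eq : ∀ x, σ x = σ 0 - 2 • x := by
    intro x
    rcases eq_or_ne x 0 with rfl | hx
    · simp
    · linear_combination (norm := module) -h.sub_eq_two_nsmul_of_compl_add hσ hx
  have hd : Bijective fun x : A => 2 • x := by
    rwa [show σ = Equiv.subLeft (σ 0) ∘ (2 • ·) from funext hσ_eq,
      (Equiv.subLeft _).bijective.of_comp_iff'] at hσ
  refine not_shiftOrbitCondition_compl_sub (b := σ 0) hd he ?_
  convert h using 4 with x
  rw [hσ_eq x]
  abel

theorem ShiftOrbitCondition.exists_forall_add_mem [Finite A] {e : A} (he : 3 • e ≠ 0)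
    (h : ShiftOrbitCondition {j : A // j ≠ 0} V) : ∃ c, ∀ x, x + c ∈ V x := by
  by_contra! hno
  choose σ hσ using h.exists_forall_ne
  obtain ⟨hbij, hV⟩ := bijective_and_eq_compl_of_forall_ne hno hσ
  rw [funext hV] at h
  exact not_shiftOrbitCondition_compl_add hbij he h

end ShiftOrbitCondition

open Fin.CommRing in
theorem mem_zpowers_finRotate_iff {k : ℕ} {g : Equiv.Perm (Fin (k + 1))} :
    g ∈ Subgroup.zpowers (finRotate (k + 1)) ↔ ∃ c, Equiv.addRight c = g := by
  have hrot : finRotate (k + 1) = Equiv.addRight 1 := by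
    ext
    simp
  rw [hrot, Subgroup.mem_zpowers_iff]
  constructor
  · rintro ⟨m, rfl⟩
    exact ⟨m • 1, (Equiv.zsmul_addRight 1 m).symm⟩
  · rintro ⟨c, rfl⟩
    refine ⟨c.val, ?_⟩
    rw [zpow_natCast, Equiv.nsmul_addRight, nsmul_one, Fin.cast_val_eq_self]

theorem kOrbitCondition_zpowers_finRotate_iff {k m : ℕ} {V : Fin (k + 1) → Set (Fin (k + 1))} :
    kOrbitCondition m (Subgroup.zpowers (finRotate (k + 1))) V ↔
      ShiftOrbitCondition (Fin m) V := by
  simp only [kOrbitCondition, ShiftOrbitCondition, ShiftMemBox, mem_zpowers_finRotate_iff,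
    exists_exists_eq_and, Equiv.coe_addRight]

theorem hasMarriage_zpowers_finRotate_iff {k : ℕ} {V : Fin (k + 1) → Set (Fin (k + 1))} :
    hasMarriage (Subgroup.zpowers (finRotate (k + 1))) V ↔ ∃ c, ∀ x, x + c ∈ V x := by
  simp only [hasMarriage, mem_zpowers_finRotate_iff, exists_exists_eq_and, Equiv.coe_addRight]

open Fin.CommRing in
theorem three_nsmul_one_ne_zero {n : ℕ} [NeZero n] (hn : 4 ≤ n) : 3 • (1 : Fin n) ≠ 0 := by
  rw [nsmul_one, Ne, Fin.natCast_eq_zero]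
  exact fun h => absurd (Nat.le_of_dvd three_pos h) (by omega)

/-- For `n ≥ 4` and `G` the cyclic group generated by the `n`-cycle `(1 2 ⋯ n)`,
`G` satisfies the `(n-1)`-orbit condition subject to `V` iff `G` has a
`G`-marriage subject to `V`. -/
theorem stmt_6 (n : ℕ) (hn : 4 ≤ n) (V : Fin n → Set (Fin n)) :
    kOrbitCondition (n - 1) (Subgroup.zpowers (finRotate n)) V ↔
      hasMarriage (Subgroup.zpowers (finRotate n)) V := by
  obtain ⟨k, rfl⟩ : ∃ k, n = k + 1 := ⟨n - 1, by omega⟩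
  rw [Nat.add_sub_cancel, kOrbitCondition_zpowers_finRotate_iff,
    hasMarriage_zpowers_finRotate_iff]
  exact ⟨fun h => (h.of_equiv (finSuccAboveEquiv 0)).exists_forall_add_mem
    (three_nsmul_one_ne_zero hn), fun ⟨_, hc⟩ => shiftOrbitCondition_of_forall_add_mem hc⟩
end

section
/- Let n ≥ 4 and let G = Alt([n]) be the alternating group on [n]. For every system V of subsets V_1,...,V_n of [n], G satisfies the (n-1)-orbit condition subject to V if and only if G has a G-marriage subject to V. -/
open Equiv Equiv.Perm

theorem Equiv.Perm.mul_swap_mem_derangements {α : Type*} [DecidableEq α] {c : Perm α}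
    (hc : c ∈ derangements α) {a b : α} (hab : c b ≠ a) (hba : c a ≠ b) :
    c * swap a b ∈ derangements α := by
  intro x
  rw [mul_apply]
  rcases eq_or_ne x a with rfl | hxa
  · rwa [swap_apply_left]
  rcases eq_or_ne x b with rfl | hxb
  · rwa [swap_apply_right]
  rw [swap_apply_of_ne_of_ne hxa hxb]
  exact hc x

theorem exists_mem_derangements_fin_sign_eq (k : ℕ) (s : ℤˣ) :
    ∃ d ∈ derangements (Fin (k + 4)), sign d = s := by
  have hc : finRotate (k + 4) ∈ derangements (Fin (k + 4)) := fun x =>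
    mem_support.mp (support_finRotate (n := k + 2) ▸ Finset.mem_univ x)
  by_cases hs : sign (finRotate (k + 4)) = s
  · exact ⟨_, hc, hs⟩
  have h02 : (0 : Fin (k + 4)) ≠ 2 := by simp [Fin.ext_iff, Nat.mod_eq_of_lt]
  refine ⟨finRotate (k + 4) * swap 0 2, mul_swap_mem_derangements hc ?_ ?_, ?_⟩
  · simp [finRotate_apply, Fin.ext_iff, Fin.val_add, Nat.mod_eq_of_lt]
  · simp [finRotate_apply, Fin.ext_iff, Nat.mod_eq_of_lt]
  · rw [Perm.sign_mul, sign_swap h02, mul_neg_one, eq_comm, ← Int.units_ne_iff_eq_neg]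
    exact Ne.symm hs

theorem exists_mem_derangements_sign_eq {α : Type*} [Fintype α] [DecidableEq α]
    (hα : 4 ≤ Fintype.card α) (s : ℤˣ) : ∃ d ∈ derangements α, sign d = s := by
  obtain ⟨k, hk⟩ := Nat.exists_eq_add_of_le' hα
  obtain ⟨d, hd, hds⟩ := exists_mem_derangements_fin_sign_eq k s
  let e := (Fintype.equivFinOfCardEq hk).symm
  refine ⟨e.permCongr d, fun x => ?_, by rw [sign_permCongr, hds]⟩
  rw [permCongr_apply, Ne, ← eq_symm_apply]
  exact hd (e.symm x)

theorem Fin.forall_ne_of_forall_succAbove {m : ℕ} (a : Fin (m + 1)) {P : Fin (m + 1) → Prop}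
    (h : ∀ j, P (a.succAbove j)) : ∀ x ≠ a, P x := fun x hx => by
  obtain ⟨j, rfl⟩ := Fin.exists_succAbove_eq hx
  exact h j

theorem hasMarriage_alternatingGroup_of_forall_ne {n : ℕ} (hn : 4 ≤ n) {V : Fin n → Set (Fin n)}
    (T : Perm (Fin n)) (hT : ∀ a x, x ≠ a → T a ∈ V x) :
    hasMarriage (alternatingGroup (Fin n)) V := by
  obtain ⟨d, hd, hds⟩ :=
    exists_mem_derangements_sign_eq (α := Fin n) (by rwa [Fintype.card_fin]) (sign T)
  refine ⟨T * d, ?_, fun x => hT (d x) x (hd x).symm⟩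
  rw [mem_alternatingGroup, Perm.sign_mul, hds, Int.units_mul_self]

theorem kOrbitCondition_of_hasMarriage {n k : ℕ} {G : Subgroup (Perm (Fin n))}
    {V : Fin n → Set (Fin n)} (h : hasMarriage G V) : kOrbitCondition k G V := by
  obtain ⟨g, hg, hgV⟩ := h
  exact fun Y _ => ⟨g, hg, fun y hy => ⟨y, hy, fun j => hgV (y j)⟩⟩

namespace kOrbitCondition

section
variable {n k : ℕ} {G : Subgroup (Perm (Fin n))} {V : Fin n → Set (Fin n)}

theorem exists_pair (h : kOrbitCondition k G V) (y z : Fin k → Fin n) :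
    ∃ g ∈ G, ((∀ j, g (y j) ∈ V (y j)) ∨ ∀ j, g (y j) ∈ V (z j)) ∧
      ((∀ j, g (z j) ∈ V (y j)) ∨ ∀ j, g (z j) ∈ V (z j)) := by
  obtain ⟨g, hg, hY⟩ := h {y, z} (Set.insert_nonempty y {z})
  have row : ∀ w ∈ ({y, z} : Set (Fin k → Fin n)),
      (∀ j, g (w j) ∈ V (y j)) ∨ ∀ j, g (w j) ∈ V (z j) := by
    intro w hw
    obtain ⟨u, rfl | rfl, hu⟩ := hY w hw
    exacts [.inl hu, .inr hu]
  exact ⟨g, hg, row y (by simp), row z (by simp)⟩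

theorem exists_forall_mem (h : kOrbitCondition k G V) (y : Fin k → Fin n) :
    ∃ g ∈ G, ∀ j, g (y j) ∈ V (y j) := by
  obtain ⟨g, hg, hy, -⟩ := h.exists_pair y y
  exact ⟨g, hg, hy.elim id id⟩

end

variable {m : ℕ} {G : Subgroup (Perm (Fin (m + 1)))} {V : Fin (m + 1) → Set (Fin (m + 1))}

theorem exists_forall_ne_mem (h : kOrbitCondition m G V) (a : Fin (m + 1)) :
    ∃ g ∈ G, ∀ x ≠ a, g x ∈ V x := by
  obtain ⟨g, hg, hgV⟩ := h.exists_forall_mem a.succAbove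
  exact ⟨g, hg, Fin.forall_ne_of_forall_succAbove a hgV⟩

theorem exists_forbidden_value (hm : 0 < m) (h : kOrbitCondition m G V) (hV : ¬hasMarriage G V)
    (a : Fin (m + 1)) : ∃ t ∉ V a, ∀ x ≠ a, t ∈ V x := by
  have not_completes : ∀ g ∈ G, (∀ x ≠ a, g x ∈ V x) → g a ∉ V a := fun g hg hne ha =>
    hV ⟨g, hg, fun x => (eq_or_ne x a).elim (· ▸ ha) (hne x)⟩
  have hVa : V a ≠ Set.univ := fun hVa => by
    obtain ⟨g, hg, hne⟩ := h.exists_forall_ne_mem a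
    exact not_completes g hg hne (hVa ▸ trivial)
  obtain ⟨g, hg, hrow₁, hrow₂⟩ := h.exists_pair (fun _ => a) a.succAbove
  have hga : g a ∉ V a := by
    intro hga
    rcases hrow₂ with hrow₂ | hrow₂
    · refine hVa (Set.eq_univ_of_forall fun w => ?_)
      rcases eq_or_ne (g.symm w) a with hw | hw
      · rwa [← g.apply_symm_apply w, hw]
      · simpa using Fin.forall_ne_of_forall_succAbove (P := fun x => g x ∈ V a) a hrow₂ _ hw
    · exact not_completes g hg (Fin.forall_ne_of_forall_succAbove a hrow₂) hga
  refine ⟨g a, hga, Fin.forall_ne_of_forall_succAbove a ?_⟩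
  exact hrow₁.resolve_left fun h' => hga (h' ⟨0, hm⟩)

end kOrbitCondition

/-- For `n ≥ 4`, the alternating group `Alt([n])` satisfies the `(n-1)`-orbit condition
subject to `V` iff it has a `G`-marriage subject to `V`. -/
theorem stmt_7 (n : ℕ) (hn : 4 ≤ n) (V : Fin n → Set (Fin n)) :
    kOrbitCondition (n - 1) (alternatingGroup (Fin n)) V ↔
      hasMarriage (alternatingGroup (Fin n)) V := by
  refine ⟨fun h => ?_, kOrbitCondition_of_hasMarriage⟩
  obtain ⟨m, rfl⟩ : ∃ m, n = m + 1 := ⟨n - 1, by omega⟩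
  by_contra hV
  choose t htV htV' using h.exists_forbidden_value (by omega) hV
  have ht : Function.Injective t := fun a b hab =>
    by_contra fun hne => htV b (hab ▸ htV' a b (Ne.symm hne))
  exact hV <| hasMarriage_alternatingGroup_of_forall_ne hn
    (Equiv.ofBijective t (Finite.injective_iff_bijective.mp ht)) htV'
end

section
/- If G is a primitive permutation group of degree n with G ≠ Sym([n]), then G has a base of size at most n-2; that is, there exists a subset B ⊆ [n] with |B| ≤ n-2 whose pointwise stabilizer in G is trivial. -/
/-! A permutation fixing all but at most two points is the identity or a transposition, and by
Jordan's theorem a primitive group containing a transposition is the full symmetric group. So if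
`G ≠ Sym([n])`, the complement of any two points of `[n]` is a base. -/

/-- A permutation group `G ≤ Sym([n])` is primitive: it is transitive and every
block of its action on `[n]` is trivial. -/
def IsPrimitivePermGroup {n : ℕ} (G : Subgroup (Equiv.Perm (Fin n))) : Prop :=
  MulAction.IsPretransitive G (Fin n) ∧
    ∀ B : Set (Fin n), MulAction.IsBlock G B → MulAction.IsTrivialBlock B

open Equiv Finset MulAction

theorem Equiv.Perm.eq_one_or_isSwap_of_support_subset {α : Type*} [DecidableEq α] [Fintype α]
    {σ : Perm α} {s : Finset α} (hs : #s ≤ 2) (hσ : σ.support ⊆ s) :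
    σ = 1 ∨ σ.IsSwap := by
  refine or_iff_not_imp_left.mpr fun hσ1 => Perm.card_support_eq_two.mp ?_
  have := Perm.two_le_card_support_of_ne_one hσ1
  have := card_le_card hσ
  omega

theorem IsPrimitivePermGroup.isPreprimitive {n : ℕ} {G : Subgroup (Perm (Fin n))}
    (hG : IsPrimitivePermGroup G) : IsPreprimitive G (Fin n) :=
  haveI := hG.1
  ⟨fun hB => hG.2 _ hB⟩

theorem IsPrimitivePermGroup.eq_one_of_support_subset {n : ℕ} {G : Subgroup (Perm (Fin n))}
    (hG : IsPrimitivePermGroup G) (hne : G ≠ ⊤) {s : Finset (Fin n)} (hs : #s ≤ 2)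
    {g : Perm (Fin n)} (hg : g ∈ G) (hgs : g.support ⊆ s) : g = 1 :=
  (Perm.eq_one_or_isSwap_of_support_subset hs hgs).resolve_right fun hswap =>
    hne (Perm.subgroup_eq_top_of_isPreprimitive_of_isSwap_mem hG.isPreprimitive g hswap hg)

/-- If `G` is a primitive permutation group of degree `n` with `G ≠ Sym([n])`, then `G`
has a base of size at most `n - 2`: a set whose pointwise stabilizer in `G` is trivial. -/
theorem stmt_8 (n : ℕ) (G : Subgroup (Equiv.Perm (Fin n)))
    (hprim : IsPrimitivePermGroup G) (hne : G ≠ ⊤) :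
    ∃ B : Finset (Fin n), B.card ≤ n - 2 ∧
      ∀ g ∈ G, (∀ b ∈ B, g b = b) → g = 1 := by
  obtain ⟨s, -, hs⟩ :=
    exists_subset_card_eq (s := (univ : Finset (Fin n))) (n := min 2 n) (by simp)
  refine ⟨univ \ s, ?_, fun g hg hfix => ?_⟩
  · rw [card_sdiff_of_subset (subset_univ s), card_univ, Fintype.card_fin, hs]
    omega
  · refine hprim.eq_one_of_support_subset hne (hs.trans_le (min_le_left _ _)) hg fun x hx => ?_
    by_contra hxs
    exact Perm.mem_support.mp hx (hfix x (mem_sdiff.mpr ⟨mem_univ x, hxs⟩))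
end

section
/- Suppose G is a transitive permutation group acting on [n] such that the orbit condition is sufficient for the G-Marriage Problem, i.e., for every system V of subsets of [n], if G satisfies the orbit condition subject to V then G has a G-marriage subject to V. Then G = Sym([n]). -/
/-- If `G` is a transitive permutation group on `[n]` for which the orbit condition is
sufficient for the `G`-Marriage Problem, then `G = Sym([n])`. -/
theorem stmt_9 (n : ℕ) (G : Subgroup (Equiv.Perm (Fin n)))
    (htrans : ∀ i j : Fin n, ∃ g ∈ G, g i = j)
    (hsuff : ∀ V : Fin n → Set (Fin n), orbitCondition G V → hasMarriage G V) :
    G = ⊤ := by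
  classical
  suffices h : ∀ k (S : Finset (Fin n)) (φ : Fin n → Fin n), S.card ≤ k →
      Set.InjOn φ ↑S → ∃ g ∈ G, ∀ i ∈ S, g i = φ i by
    apply le_antisymm le_top
    intro σ _
    obtain ⟨g, hgG, hg⟩ := h n Finset.univ σ
      (le_of_eq (Finset.card_univ.trans (Fintype.card_fin n))) (σ.injective.injOn)
    have hgσ : g = σ := Equiv.ext fun i => hg i (Finset.mem_univ i)
    exact hgσ ▸ hgG
  intro k
  induction k with
  | zero =>
    intro S φ hS _
    refine ⟨1, G.one_mem, ?_⟩
    intro i hi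
    rw [Finset.card_eq_zero.mp (Nat.le_zero.mp hS)] at hi
    exact absurd hi (Finset.notMem_empty i)
  | succ k IH =>
    intro S φ hS hφ
    by_cases hSk : S.card ≤ k
    · exact IH S φ hSk hφ
    have hcard : S.card = k + 1 := le_antisymm hS (not_le.mp hSk)
    have hSne : S.Nonempty := Finset.card_pos.mp (by omega)
    obtain ⟨a, haS⟩ := hSne
    set A := S.erase a with hA
    set b := φ a with hbdef
    set B := A.image φ with hB
    have haA : a ∉ A := Finset.notMem_erase a S
    have hAS : A ⊆ S := Finset.erase_subset a S
    have hAcard : A.card = k := by rw [hA, Finset.card_erase_of_mem haS, hcard]; omega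
    have hbB : b ∉ B := by
      rw [hB]
      simp only [Finset.mem_image, not_exists]
      rintro x ⟨hxA, hxb⟩
      have hxa : x = a := hφ (hAS hxA) haS hxb
      exact haA (hxa ▸ hxA)
    set V : Fin n → Set (Fin n) :=
      fun i => if i ∈ A then {φ i} else if i = a then (↑B : Set (Fin n))ᶜ else {b}ᶜ with hV
    have hVA : ∀ i ∈ A, V i = {φ i} := by
      intro i hi; simp [hV, hi]
    have hVa : V a = (↑B : Set (Fin n))ᶜ := by simp [hV, haA]
    have hVo : ∀ i, i ∉ A → i ≠ a → V i = {b}ᶜ := by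
      intro i h1 h2; simp [hV, h1, h2]
    have horb : orbitCondition G V := by
      rintro Y ⟨y0, hy0⟩
      by_cases haY : a ∈ Y
      · by_cases hYS : Y ⊆ ↑S
        · -- case 1: Y ⊆ S, a ∈ Y
          set D := A.filter (fun x => x ∉ Y) with hD
          set F := D.image φ with hF
          have hDY : ∀ x ∈ D, x ∉ Y := fun x hx => (Finset.mem_filter.mp hx).2
          have hDA : D ⊆ A := Finset.filter_subset _ _
          set Yc := Finset.univ.filter (fun x => x ∉ Y) with hYc
          have hDYc : D ⊆ Yc := fun x hx =>
            Finset.mem_filter.mpr ⟨Finset.mem_univ _, hDY x hx⟩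
          have hFD : F.card ≤ D.card := Finset.card_image_le
          obtain ⟨T, hTYc, hTcard⟩ := Finset.exists_subset_card_eq
            (hFD.trans (Finset.card_le_card hDYc))
          have hTY : ∀ x ∈ T, x ∉ Y := fun x hx => (Finset.mem_filter.mp (hTYc hx)).2
          have e := Finset.equivOfCardEq hTcard
          set ψ : Fin n → Fin n := fun x => if hx : x ∈ T then (e ⟨x, hx⟩ : Fin n) else x
            with hψ
          have hψT : ∀ x (hx : x ∈ T), ψ x = (e ⟨x, hx⟩ : Fin n) := by
            intro x hx; simp [hψ, hx]
          have hψinj : Set.InjOn ψ ↑T := by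
            intro x hx y hy hxy
            rw [Finset.mem_coe] at hx hy
            rw [hψT x hx, hψT y hy] at hxy
            have := e.injective (Subtype.ext hxy)
            exact congrArg Subtype.val this
          have hTk : T.card ≤ k :=
            hTcard ▸ (hFD.trans ((Finset.card_le_card hDA).trans_eq hAcard))
          obtain ⟨g, hgG, hgT⟩ := IH T ψ hTk hψinj
          have hgF : ∀ f ∈ F, ∃ t ∈ T, g t = f := by
            intro f hf
            obtain ⟨⟨t, htT⟩, ht⟩ := e.surjective ⟨f, hf⟩
            refine ⟨t, htT, ?_⟩
            rw [hgT t htT, hψT t htT, ht]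
          refine ⟨g, hgG, ?_⟩
          rintro _ ⟨y, hyY, rfl⟩
          by_cases hgy : g y ∈ B
          · obtain ⟨x, hxA, hx⟩ := Finset.mem_image.mp (hB ▸ hgy)
            by_cases hxY : x ∈ Y
            · refine Set.mem_biUnion hxY ?_
              rw [hVA x hxA]
              exact Set.mem_singleton_iff.mpr hx.symm
            · have hxD : x ∈ D := Finset.mem_filter.mpr ⟨hxA, hxY⟩
              have hφF : φ x ∈ F := Finset.mem_image_of_mem φ hxD
              obtain ⟨t, htT, hgt⟩ := hgF _ hφF
              have hyt : y = t := g.injective (by rw [hgt, hx])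
              exact absurd hyY (hyt ▸ hTY t htT)
          · refine Set.mem_biUnion haY ?_
            rw [hVa]
            exact hgy
        · -- a ∈ Y, Y ⊄ S : union is everything
          obtain ⟨j, hjY, hjS⟩ := Set.not_subset.mp hYS
          refine ⟨1, G.one_mem, ?_⟩
          rintro _ ⟨y, hyY, rfl⟩
          simp only [Equiv.Perm.coe_one, id_eq]
          by_cases hyB : y ∈ B
          · refine Set.mem_biUnion hjY ?_
            have hjA : j ∉ A := fun h => hjS (Finset.mem_coe.mpr (hAS h))
            have hja : j ≠ a := fun h => hjS (Finset.mem_coe.mpr (h ▸ haS))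
            rw [hVo j hjA hja]
            exact fun h => hbB ((Set.mem_singleton_iff.mp h) ▸ hyB)
          · refine Set.mem_biUnion haY ?_
            rw [hVa]
            exact hyB
      · by_cases hYA : Y ⊆ ↑A
        · -- a ∉ Y, Y ⊆ A
          set Yf := (Y.toFinite).toFinset with hYf
          have hYfY : ∀ x, x ∈ Yf ↔ x ∈ Y := fun x => Set.Finite.mem_toFinset _
          have hYfA : Yf ⊆ A := fun x hx => Finset.mem_coe.mp (hYA ((hYfY x).mp hx))
          have hYfS : ↑Yf ⊆ (↑S : Set (Fin n)) := fun x hx =>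
            Finset.mem_coe.mpr (hAS (hYfA (Finset.mem_coe.mp hx)))
          have hYfk : Yf.card ≤ k := (Finset.card_le_card hYfA).trans_eq hAcard
          obtain ⟨g, hgG, hgY⟩ := IH Yf φ hYfk (hφ.mono hYfS)
          refine ⟨g, hgG, ?_⟩
          rintro _ ⟨y, hyY, rfl⟩
          have hyf : y ∈ Yf := (hYfY y).mpr hyY
          refine Set.mem_biUnion hyY ?_
          rw [hgY y hyf, hVA y (hYfA hyf)]
          exact rfl
        · -- a ∉ Y, Y ⊄ A
          obtain ⟨j, hjY, hjA⟩ := Set.not_subset.mp hYA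
          obtain ⟨g, hgG, hga⟩ := htrans a b
          refine ⟨g, hgG, ?_⟩
          rintro _ ⟨y, hyY, rfl⟩
          refine Set.mem_biUnion hjY ?_
          have hja : j ≠ a := fun h => haY (h ▸ hjY)
          have hjA' : j ∉ A := fun h => hjA (Finset.mem_coe.mpr h)
          rw [hVo j hjA' hja]
          intro h
          have : y = a := g.injective ((Set.mem_singleton_iff.mp h).trans hga.symm)
          exact haY (this ▸ hyY)
    obtain ⟨g, hgG, hgV⟩ := hsuff V horb
    have hgA : ∀ i ∈ A, g i = φ i := by
      intro i hi
      have := hgV i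
      rw [hVA i hi] at this
      exact Set.mem_singleton_iff.mp this
    have hga : g a = b := by
      set x := g.symm b with hx
      have hgx : g x = b := g.apply_symm_apply b
      have hxS : x ∈ S := by
        by_contra hxS
        have hxa : x ≠ a := fun h => hxS (h ▸ haS)
        have hxA : x ∉ A := fun h => hxS (hAS h)
        have := hgV x
        rw [hVo x hxA hxa] at this
        exact this (Set.mem_singleton_iff.mpr hgx)
      have hxA : x ∉ A := by
        intro hxA
        have h1 : φ x = b := (hgA x hxA) ▸ hgx
        have hxa : x = a := hφ (hAS hxA) haS h1
        exact haA (hxa ▸ hxA)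
      have hxa : x = a := by
        by_contra hne
        exact hxA (Finset.mem_erase.mpr ⟨hne, hxS⟩)
      rw [← hxa, hgx]
    refine ⟨g, hgG, ?_⟩
    intro i hiS
    by_cases hia : i = a
    · rw [hia, hga, hbdef]
    · exact hgA i (Finset.mem_erase.mpr ⟨hia, hiS⟩)
end

section
/- Let G be a permutation group acting on [n] and V a system of subsets V_1,...,V_n of [n]. Suppose G satisfies the (n-1)-orbit condition subject to V and G does not have a G-marriage subject to V. Then for each i ∈ [n] there exists g_i ∈ G such that g_i(i) ∈ V_j and g_i(j) ∈ V_j for all j ≠ i, but g_i(i) ∉ V_i. -/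
/-! Fix `i` and let `e` be the `(n-1)`-tuple listing `[n] ∖ {i}`. Since there is no marriage, any
`g ∈ G` with `g j ∈ V j` for all `j ≠ i` has `g i ∉ V i`. The orbit condition for `{e}` yields
such an `a`. For `{e, (i, …, i)}` it yields `g`, where `e` goes either into the box of `e` (then
`g i ∉ V i`) or into `V i × ⋯ × V i` (then `V i` misses only `g i`, so `g i = a i ∉ V i`). Either
way the constant tuple cannot land in its own box, so `g i ∈ V j` for all `j ≠ i`, and `g`
resp. `a` is the required permutation. -/

theorem Fin.forall_ne_iff_forall_succAbove {n : ℕ} (i : Fin (n + 1)) {P : Fin (n + 1) → Prop} :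
    (∀ j, j ≠ i → P j) ↔ ∀ q, P (i.succAbove q) :=
  ⟨fun h q => h _ (i.succAbove_ne q), fun h j hj => by
    obtain ⟨q, rfl⟩ := Fin.exists_succAbove_eq hj
    exact h q⟩

theorem Equiv.Perm.eq_apply_of_forall_ne_mem {α : Type*} {g : Equiv.Perm α} {i x : α}
    {S : Set α} (hS : ∀ j, j ≠ i → g j ∈ S) (hx : x ∉ S) : x = g i := by
  obtain ⟨j, rfl⟩ := g.surjective x
  by_contra hji
  exact hx (hS j fun h => hji (h ▸ rfl))

theorem apply_notMem_of_not_hasMarriage {n : ℕ} {G : Subgroup (Equiv.Perm (Fin n))}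
    {V : Fin n → Set (Fin n)} (hnomar : ¬ hasMarriage G V) {g : Equiv.Perm (Fin n)} (hg : g ∈ G)
    {i : Fin n} (hgV : ∀ j, j ≠ i → g j ∈ V j) : g i ∉ V i := fun hgi =>
  hnomar ⟨g, hg, fun j => if hj : j = i then hj ▸ hgi else hgV j hj⟩

namespace kOrbitCondition

variable {n k : ℕ} {G : Subgroup (Equiv.Perm (Fin n))} {V : Fin n → Set (Fin n)}

theorem exists_mem_forall_apply_mem (horb : kOrbitCondition k G V) (y : Fin k → Fin n) :
    ∃ g ∈ G, ∀ p, g (y p) ∈ V (y p) := by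
  obtain ⟨g, hg, hY⟩ := horb {y} (Set.singleton_nonempty y)
  obtain ⟨z, rfl, hz⟩ := hY y rfl
  exact ⟨g, hg, hz⟩

theorem exists_mem_pair (horb : kOrbitCondition k G V) (y z : Fin k → Fin n) :
    ∃ g ∈ G, ((∀ p, g (y p) ∈ V (y p)) ∨ ∀ p, g (y p) ∈ V (z p)) ∧
      ((∀ p, g (z p) ∈ V (y p)) ∨ ∀ p, g (z p) ∈ V (z p)) := by
  obtain ⟨g, hg, hY⟩ := horb {y, z} (Set.insert_nonempty y {z})
  have hbox : ∀ x ∈ ({y, z} : Set (Fin k → Fin n)),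
      (∀ p, g (x p) ∈ V (y p)) ∨ ∀ p, g (x p) ∈ V (z p) := by
    intro x hx
    obtain ⟨w, hw | hw, hxw⟩ := hY x hx <;> subst hw
    exacts [Or.inl hxw, Or.inr hxw]
  exact ⟨g, hg, hbox y (Set.mem_insert y {z}), hbox z (Set.mem_insert_of_mem y rfl)⟩

end kOrbitCondition

theorem kOrbitCondition.exists_mem_forall_ne_apply_mem {m : ℕ}
    {G : Subgroup (Equiv.Perm (Fin (m + 2)))} {V : Fin (m + 2) → Set (Fin (m + 2))} (horb : kOrbitCondition (m + 1) G V)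
    (hnomar : ¬ hasMarriage G V) (i : Fin (m + 2)) :
    ∃ g ∈ G, ∀ j, j ≠ i → g j ∈ V j ∧ g i ∈ V j := by
  obtain ⟨a, haG, ha⟩ := horb.exists_mem_forall_apply_mem i.succAbove
  replace ha : ∀ j, j ≠ i → a j ∈ V j := i.forall_ne_iff_forall_succAbove.2 ha
  have hai : a i ∉ V i := apply_notMem_of_not_hasMarriage hnomar haG ha
  obtain ⟨g, hgG, hge, hgu⟩ := horb.exists_mem_pair i.succAbove fun _ => i
  replace hge : (∀ j, j ≠ i → g j ∈ V j) ∨ ∀ j, j ≠ i → g j ∈ V i :=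
    hge.imp i.forall_ne_iff_forall_succAbove.2 i.forall_ne_iff_forall_succAbove.2
  replace hgu : (∀ j, j ≠ i → g i ∈ V j) ∨ ∀ q : Fin (m + 1), g i ∈ V i :=
    hgu.imp_left i.forall_ne_iff_forall_succAbove.2
  have hgi : g i ∉ V i := by
    rcases hge with hge | hge
    · exact apply_notMem_of_not_hasMarriage hnomar hgG hge
    · rwa [← Equiv.Perm.eq_apply_of_forall_ne_mem hge hai]
  have hgu : ∀ j, j ≠ i → g i ∈ V j :=
    hgu.resolve_right fun h => hgi (h 0)
  rcases hge with hge | hge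
  · exact ⟨g, hgG, fun j hj => ⟨hge j hj, hgu j hj⟩⟩
  · rw [← Equiv.Perm.eq_apply_of_forall_ne_mem hge hai] at hgu
    exact ⟨a, haG, fun j hj => ⟨ha j hj, hgu j hj⟩⟩

/-- If `G` satisfies the `(n-1)`-orbit condition subject to `V` but has no `G`-marriage
subject to `V`, then for each `i` there is `gᵢ ∈ G` with `gᵢ i, gᵢ j ∈ V j` for all
`j ≠ i` but `gᵢ i ∉ V i`. -/
theorem stmt_11 (n : ℕ) (G : Subgroup (Equiv.Perm (Fin n))) (V : Fin n → Set (Fin n))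
    (horb : kOrbitCondition (n - 1) G V) (hnomar : ¬ hasMarriage G V) :
    ∀ i : Fin n, ∃ g ∈ G,
      (∀ j : Fin n, j ≠ i → g i ∈ V j ∧ g j ∈ V j) ∧ g i ∉ V i := by
  intro i
  suffices ∃ g ∈ G, ∀ j, j ≠ i → g j ∈ V j ∧ g i ∈ V j by
    obtain ⟨g, hg, hgV⟩ := this
    exact ⟨g, hg, fun j hj => (hgV j hj).symm,
      apply_notMem_of_not_hasMarriage hnomar hg fun j hj => (hgV j hj).1⟩
  match n, G, V, horb, hnomar, i with
  | 1, G, _, _, _, i => exact ⟨1, one_mem G, fun j hj => absurd (Subsingleton.elim j i) hj⟩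
  | m + 2, _, _, horb, hnomar, i => exact horb.exists_mem_forall_ne_apply_mem hnomar i
end

section
/- Let G be a permutation group acting on [n] and V a system of subsets V_1,...,V_n of [n]. If G satisfies the (n-1)-orbit condition subject to V and G does not have a G-marriage subject to V, then |G| ≥ n. -/
/-!
Suppose `|G| ≤ k` and there is no `G`-marriage. Then every `g ∈ G` has a bad point `i_g` with
`g i_g ∉ V i_g`, and since there are at most `k` of them they fit into a single `k`-tuple `y`.
The `k`-orbit condition applied to `Y = {y}` yields `g ∈ G` with `g (y j) ∈ V (y j)` for every
coordinate, in particular at `i_g`, a contradiction.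
-/

variable {n k : ℕ} {G : Subgroup (Equiv.Perm (Fin n))} {V : Fin n → Set (Fin n)}

theorem kOrbitCondition.exists_forall_apply_mem (h : kOrbitCondition k G V) (y : Fin k → Fin n) :
    ∃ g ∈ G, ∀ j, g (y j) ∈ V (y j) := by
  obtain ⟨g, hg, hgy⟩ := h {y} (Set.singleton_nonempty y)
  obtain ⟨z, rfl, hz⟩ := hgy y rfl
  exact ⟨g, hg, hz⟩

theorem kOrbitCondition.hasMarriage_of_card_le (h : kOrbitCondition k G V)
    (hk : Nat.card G ≤ k) : hasMarriage G V := by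
  by_contra hnomar
  have hbad : ∀ g : G, ∃ i, (g : Equiv.Perm (Fin n)) i ∉ V i := fun g => by
    by_contra! hg
    exact hnomar ⟨g, g.2, hg⟩
  choose bad hbad using hbad
  let e : G ↪ Fin k := (Finite.equivFin G).toEmbedding.trans (Fin.castLEEmb hk)
  obtain ⟨g, hg, hgy⟩ := h.exists_forall_apply_mem (bad ∘ Function.invFun e)
  have hinv : Function.invFun e (e ⟨g, hg⟩) = ⟨g, hg⟩ :=
    Function.leftInverse_invFun e.injective _
  have := hgy (e ⟨g, hg⟩)
  simp only [Function.comp_apply, hinv] at this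
  exact hbad _ this

/-- If `G` satisfies the `(n-1)`-orbit condition subject to `V` but has no `G`-marriage
subject to `V`, then `|G| ≥ n`. -/
theorem stmt_12 (n : ℕ) (G : Subgroup (Equiv.Perm (Fin n))) (V : Fin n → Set (Fin n))
    (horb : kOrbitCondition (n - 1) G V) (hnomar : ¬ hasMarriage G V) :
    n ≤ Nat.card G := by
  by_contra! hcard
  exact hnomar (horb.hasMarriage_of_card_le (by omega))
end

section
/- Let G be a permutation group acting on [n] and V a system of subsets V_1,...,V_n of [n]. If G satisfies the (n-1)-orbit condition subject to V and G does not have a G-marriage subject to V, then there exist elements a_1,...,a_n ∈ [n] with {a_1,...,a_n} = [n] (i.e., i ↦ a_i is a bijection of [n]) such that V_i = [n] \ {a_i} for every i = 1,...,n. -/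
/-- Main work lemma: the case `n = m + 2`. -/
theorem stmt13_aux (m : ℕ) (G : Subgroup (Equiv.Perm (Fin (m+2))))
    (V : Fin (m+2) → Set (Fin (m+2)))
    (horb : ∀ Y : Set (Fin (m+1) → Fin (m+2)), Y.Nonempty →
      ∃ g ∈ G, ∀ y ∈ Y, ∃ z ∈ Y, ∀ j, g (y j) ∈ V (z j))
    (hnomar : ¬ ∃ g ∈ G, ∀ i, g i ∈ V i) :
    ∃ a : Fin (m+2) → Fin (m+2), Function.Bijective a ∧
      ∀ i, V i = Set.univ \ {a i} := by
  classical
  -- no marriage, pointwise form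
  have nomar : ∀ g : Equiv.Perm (Fin (m+2)), g ∈ G → ∃ i, g i ∉ V i := by
    intro g hg
    by_contra h
    push_neg at h
    exact hnomar ⟨g, hg, h⟩
  -- covers exist
  have cover : ∀ x : Fin (m+2), ∃ g : Equiv.Perm (Fin (m+2)), g ∈ G ∧
      ∀ t, t ≠ x → g t ∈ V t := by
    intro x
    obtain ⟨g, hgG, hg⟩ := horb {x.succAbove} ⟨_, rfl⟩
    obtain ⟨z, hz, h⟩ := hg _ rfl
    rw [Set.mem_singleton_iff] at hz
    subst hz
    refine ⟨g, hgG, fun t ht => ?_⟩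
    obtain ⟨j, hj⟩ := Fin.exists_succAbove_eq ht
    rw [← hj]; exact h j
  -- every complement is nonempty
  have Cne : ∀ x : Fin (m+2), ∃ w, w ∉ V x := by
    intro x
    obtain ⟨g, hgG, hg⟩ := cover x
    obtain ⟨i, hi⟩ := nomar g hgG
    have hix : i = x := by
      by_contra h
      exact hi (hg i h)
    exact ⟨g x, hix ▸ hi⟩
  -- dichotomy: each complement is a singleton, or there's a value missing only there
  have dich : ∀ x : Fin (m+2), (∃ aa, aa ∉ V x ∧ ∀ w, w ∉ V x → w = aa) ∨
      (∃ c, c ∉ V x ∧ ∀ t, t ≠ x → c ∈ V t) := by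
    intro x
    obtain ⟨g, hgG, hg⟩ := horb {x.succAbove, fun _ => x} ⟨_, Set.mem_insert _ _⟩
    obtain ⟨z, hzmem, hyz⟩ := hg x.succAbove (Set.mem_insert _ _)
    rcases Set.mem_insert_iff.mp hzmem with hz | hz
    · -- cover of comp{x}
      subst hz
      have hcov : ∀ t, t ≠ x → g t ∈ V t := by
        intro t ht
        obtain ⟨j, hj⟩ := Fin.exists_succAbove_eq ht
        rw [← hj]; exact hyz j
      obtain ⟨z', hz'mem, huz⟩ := hg (fun _ => x)
        (Set.mem_insert_of_mem _ (Set.mem_singleton_iff.mpr rfl))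
      rcases Set.mem_insert_iff.mp hz'mem with hz' | hz'
      · -- const x matched to the injective tuple
        subst hz'
        right
        refine ⟨g x, ?_, ?_⟩
        · intro hmem
          exact hnomar ⟨g, hgG, fun i => by
            by_cases hi : i = x
            · rwa [hi]
            · exact hcov i hi⟩
        · intro t ht
          obtain ⟨j, hj⟩ := Fin.exists_succAbove_eq ht
          rw [← hj]; exact huz j
      · -- const x matched to itself: marriage, contradiction
        rw [Set.mem_singleton_iff] at hz'
        subst hz'
        have hx : g x ∈ V x := huz 0
        exact absurd ⟨g, hgG, fun i => by
          by_cases hi : i = x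
          · rwa [hi]
          · exact hcov i hi⟩ hnomar
    · -- injective tuple matched to const x: V x is co-small
      rw [Set.mem_singleton_iff] at hz
      subst hz
      left
      have himg : ∀ t, t ≠ x → g t ∈ V x := by
        intro t ht
        obtain ⟨j, hj⟩ := Fin.exists_succAbove_eq ht
        rw [← hj]; exact hyz j
      have hchar : ∀ w, w ∉ V x → w = g x := by
        intro w hw
        obtain ⟨s, hs⟩ := g.surjective w
        by_cases hsx : s = x
        · rw [← hs, hsx]
        · exact absurd (hs ▸ himg s hsx) hw
      obtain ⟨w₀, hw₀⟩ := Cne x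
      exact ⟨g x, hchar w₀ hw₀ ▸ hw₀, hchar⟩
  -- pair lemma: two distinct singleton-complements cannot miss the same value
  have pair : ∀ x x' s : Fin (m+2), x ≠ x' →
      (s ∉ V x ∧ ∀ w, w ∉ V x → w = s) →
      (s ∉ V x' ∧ ∀ w, w ∉ V x' → w = s) → False := by
    intro x x' s hxx' hsx hsx'
    obtain ⟨hs1, hs2⟩ := hsx
    obtain ⟨hs1', hs2'⟩ := hsx'
    have hne : x' ≠ x := fun h => hxx' h.symm
    obtain ⟨j₀, hj₀⟩ := Fin.exists_succAbove_eq hne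
    set u := Function.update x.succAbove j₀ x with hu
    have hu_j₀ : u j₀ = x := by rw [hu]; simp
    have hu_ne : ∀ j, j ≠ j₀ → u j = x.succAbove j := by
      intro j hj; rw [hu]; exact Function.update_of_ne hj _ _
    have memx : ∀ w : Fin (m+2), w ≠ s → w ∈ V x := by
      intro w hw; by_contra h; exact hw (hs2 w h)
    have memx' : ∀ w : Fin (m+2), w ≠ s → w ∈ V x' := by
      intro w hw; by_contra h; exact hw (hs2' w h)
    obtain ⟨g, hgG, hg⟩ := horb {x.succAbove, u} ⟨_, Set.mem_insert _ _⟩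
    obtain ⟨z, hzmem, hyz⟩ := hg x.succAbove (Set.mem_insert _ _)
    obtain ⟨z', hz'mem, huz⟩ := hg u
      (Set.mem_insert_of_mem _ (Set.mem_singleton_iff.mpr rfl))
    -- from the y branch: g t ∈ V t for all t ≠ x
    have hyfacts : ∀ t, t ≠ x → g t ∈ V t := by
      intro t ht
      obtain ⟨j, hj⟩ := Fin.exists_succAbove_eq ht
      rcases Set.mem_insert_iff.mp hzmem with hz | hz
      · subst hz; rw [← hj]; exact hyz j
      · rw [Set.mem_singleton_iff] at hz
        subst hz
        by_cases hjj : j = j₀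
        · -- t = x'
          have h1 : g (x.succAbove j) ∈ V (u j) := hyz j
          rw [hj] at h1
          rw [hjj, hu_j₀] at h1
          have htx' : t = x' := by rw [← hj, hjj]; exact hj₀
          rw [htx'] at h1 ⊢
          exact memx' _ (fun he => hs1 (he ▸ h1))
        · have h1 := hyz j
          rw [hu_ne j hjj, hj] at h1
          exact h1
    -- from the u branch: g x ∈ V x
    have hxfact : g x ∈ V x := by
      rcases Set.mem_insert_iff.mp hz'mem with hz' | hz'
      · subst hz'
        have h1 := huz j₀
        rw [hu_j₀, hj₀] at h1
        exact memx _ (fun he => hs1' (he ▸ h1))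
      · rw [Set.mem_singleton_iff] at hz'
        subst hz'
        have h1 := huz j₀
        rwa [hu_j₀] at h1
    exact hnomar ⟨g, hgG, fun i => by
      by_cases hi : i = x
      · rwa [hi]
      · exact hyfacts i hi⟩
  -- KEY: every complement is a singleton
  have KEY : ∀ x : Fin (m+2), ∃ aa, aa ∉ V x ∧ ∀ w, w ∉ V x → w = aa := by
    by_contra hK
    push_neg at hK
    obtain ⟨x, hx⟩ := hK
    have hAx : ¬ ∃ aa, aa ∉ V x ∧ ∀ w, w ∉ V x → w = aa := by
      rintro ⟨aa, ha1, ha2⟩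
      obtain ⟨w, hw1, hw2⟩ := hx aa ha1
      exact hw2 (ha2 w hw1)
    -- choose the distinguished missing value for each index
    have sel : ∀ y : Fin (m+2), ∃ p : Fin (m+2), p ∉ V y ∧
        ((∃ aa, aa ∉ V y ∧ ∀ w, w ∉ V y → w = aa) → ∀ w, w ∉ V y → w = p) ∧
        (¬ (∃ aa, aa ∉ V y ∧ ∀ w, w ∉ V y → w = aa) → ∀ t, t ≠ y → p ∈ V t) := by
      intro y
      rcases dich y with h | ⟨c, h1, h2⟩
      · obtain ⟨aa, h1, h2⟩ := h
        exact ⟨aa, h1, fun _ => h2, fun hn => absurd ⟨aa, h1, h2⟩ hn⟩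
      · refine ⟨c, h1, ?_, fun _ => h2⟩
        rintro ⟨aa, ha1, ha2⟩ w hw
        rw [ha2 w hw, ha2 c h1]
    choose P hP1 hPA hPD using sel
    -- P is injective, hence surjective
    have Pinj : Function.Injective P := by
      intro y y' h
      by_contra hne
      by_cases hA' : ∃ aa, aa ∉ V y' ∧ ∀ w, w ∉ V y' → w = aa
      · by_cases hA : ∃ aa, aa ∉ V y ∧ ∀ w, w ∉ V y → w = aa
        · exact pair y y' (P y) hne ⟨hP1 y, hPA y hA⟩ (h ▸ ⟨hP1 y', hPA y' hA'⟩)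
        · have h2 : P y ∈ V y' := hPD y hA y' (fun hh => hne hh.symm)
          rw [h] at h2
          exact hP1 y' h2
      · have h2 : P y' ∈ V y := hPD y' hA' y hne
        rw [← h] at h2
        exact hP1 y h2
    have Psurj : Function.Surjective P := Finite.injective_iff_surjective.mp Pinj
    have hc1 : P x ∉ V x := hP1 x
    obtain ⟨v, hv1, hv2⟩ := hx (P x) hc1
    obtain ⟨q, hq⟩ := Psurj v
    have hAq : ∃ aa, aa ∉ V q ∧ ∀ w, w ∉ V q → w = aa := by
      by_contra h
      by_cases hqx : q = x
      · rw [hqx] at hq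
        exact hv2 hq.symm
      · have h2 : P q ∈ V x := hPD q h x (fun hh => hqx hh.symm)
        rw [hq] at h2
        exact hv1 h2
    have hqx : q ≠ x := fun h => hAx (h ▸ hAq)
    have hvVq : v ∉ V q := hq ▸ hP1 q
    by_cases hd2 : ∀ w, w ∉ V x → w = P x ∨ w = v
    · -- the complement of `V x` is exactly {P x, v}: killer K2
      obtain ⟨j_q, hj_q⟩ := Fin.exists_succAbove_eq hqx
      set u := Function.update (fun _ : Fin (m+1) => q) j_q x with hu
      have hu_jq : u j_q = x := by rw [hu]; simp
      have hu_ne : ∀ j, j ≠ j_q → u j = q := by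
        intro j hj; rw [hu]; exact Function.update_of_ne hj _ _
      obtain ⟨g, hgG, hg⟩ := horb {x.succAbove, u} ⟨_, Set.mem_insert _ _⟩
      obtain ⟨z, hzmem, hyz⟩ := hg x.succAbove (Set.mem_insert _ _)
      obtain ⟨z', hz'mem, huz⟩ := hg u
        (Set.mem_insert_of_mem _ (Set.mem_singleton_iff.mpr rfl))
      rcases Set.mem_insert_iff.mp hzmem with hz | hz
      · -- y ↦ y : cover of comp {x}
        subst hz
        have hcov : ∀ t, t ≠ x → g t ∈ V t := by
          intro t ht
          obtain ⟨j, hj⟩ := Fin.exists_succAbove_eq ht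
          rw [← hj]; exact hyz j
        have hgx : g x ∉ V x := by
          intro h
          exact hnomar ⟨g, hgG, fun i => by
            by_cases hi : i = x
            · rwa [hi]
            · exact hcov i hi⟩
        rcases Set.mem_insert_iff.mp hz'mem with hz' | hz'
        · -- u ↦ y
          subst hz'
          have h1 : g x ∈ V q := by
            have h2 := huz j_q
            rwa [hu_jq, hj_q] at h2
          have hgq : ∀ t2, t2 ≠ x → t2 ≠ q → g q ∈ V t2 := by
            intro t2 h2 h3
            obtain ⟨j, hj⟩ := Fin.exists_succAbove_eq h2
            have hjne : j ≠ j_q := by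
              intro hh
              rw [hh] at hj
              rw [hj_q] at hj
              exact h3 hj.symm
            have h4 := huz j
            rwa [hu_ne j hjne, hj] at h4
          obtain ⟨x₀, hx₀⟩ := Psurj (g q)
          have hgqVq : g q ∈ V q := hcov q hqx
          have hx₀x : x₀ = x := by
            by_contra h
            by_cases h2 : x₀ = q
            · rw [h2, hq] at hx₀
              exact hvVq (hx₀ ▸ hgqVq)
            · exact (hx₀ ▸ hP1 x₀) (hgq x₀ h h2)
          have hgqc : g q = P x := by rw [← hx₀, hx₀x]
          have hgxv : g x ≠ v := by
            intro h
            exact hvVq (h ▸ h1)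
          have hgxc : g x = P x := (hd2 _ hgx).resolve_right hgxv
          exact hqx (g.injective (hgqc.trans hgxc.symm))
        · -- u ↦ u
          rw [Set.mem_singleton_iff] at hz'
          subst hz'
          have h1 := huz j_q
          rw [hu_jq] at h1
          exact hgx h1
      · -- y ↦ u
        rw [Set.mem_singleton_iff] at hz
        subst hz
        have hne_v : ∀ t, t ≠ x → g t ≠ v := by
          intro t ht
          obtain ⟨j, hj⟩ := Fin.exists_succAbove_eq ht
          by_cases hjj : j = j_q
          · have h1 := hyz j
            rw [hj] at h1
            rw [hjj, hu_jq] at h1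
            intro h
            exact hv1 (h ▸ h1)
          · have h1 := hyz j
            rw [hj, hu_ne j hjj] at h1
            intro h
            exact hvVq (h ▸ h1)
        have hgxv : g x = v := by
          obtain ⟨s, hs⟩ := g.surjective v
          by_cases hsx : s = x
          · rw [← hs, hsx]
          · exact absurd hs (hne_v s hsx)
        rcases Set.mem_insert_iff.mp hz'mem with hz' | hz'
        · subst hz'
          have h1 := huz j_q
          rw [hu_jq, hj_q, hgxv] at h1
          exact hvVq h1
        · rw [Set.mem_singleton_iff] at hz'
          subst hz'
          have h1 := huz j_q
          rw [hu_jq, hgxv] at h1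
          exact hv1 h1
    · -- the complement of `V x` has a third element
      push_neg at hd2
      obtain ⟨v₂, hv₂V, hv₂c, hv₂v⟩ := hd2
      by_cases ht : ∃ t, (∃ aa, aa ∉ V t ∧ ∀ w, w ∉ V t → w = aa) ∧ t ≠ q
      · -- killer K3
        obtain ⟨t, hAt, htq⟩ := ht
        have htx : t ≠ x := fun h => hAx (h ▸ hAt)
        obtain ⟨slot, hslot⟩ := Fin.exists_succAbove_eq (show q ≠ t from fun h => htq h.symm)
        set u := Function.update (fun _ : Fin (m+1) => x) slot t with hudef
        have hu_slot : u slot = t := by rw [hudef]; simp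
        have hu_ne : ∀ j, j ≠ slot → u j = x := by
          intro j hj; rw [hudef]; exact Function.update_of_ne hj _ _
        obtain ⟨g, hgG, hg⟩ := horb {u, t.succAbove} ⟨u, Set.mem_insert _ _⟩
        obtain ⟨zw, hzwmem, hwz⟩ := hg t.succAbove
          (Set.mem_insert_of_mem _ (Set.mem_singleton_iff.mpr rfl))
        rcases Set.mem_insert_iff.mp hzwmem with hzw | hzw
        · -- w ↦ u : pigeonhole on P x, v, v₂
          subst hzw
          have hr : ∀ r, r ≠ t → r ≠ q → g r ∈ V x := by
            intro r h1 h2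
            obtain ⟨j, hj⟩ := Fin.exists_succAbove_eq h1
            have hjne : j ≠ slot := by
              intro hh
              rw [hh] at hj
              rw [hslot] at hj
              exact h2 hj.symm
            have h4 := hwz j
            rwa [hj, hu_ne j hjne] at h4
          have hins : ∀ s : Fin (m+2), g s ∉ V x → (s = t ∨ s = q) := by
            intro s hs
            by_contra h
            push_neg at h
            exact hs (hr s h.1 h.2)
          have e1 : g (g.symm (P x)) = P x := g.apply_symm_apply (P x)
          have e2 : g (g.symm v) = v := g.apply_symm_apply v
          have e3 : g (g.symm v₂) = v₂ := g.apply_symm_apply v₂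
          have h1 := hins (g.symm (P x)) (by rw [e1]; exact hc1)
          have h2 := hins (g.symm v) (by rw [e2]; exact hv1)
          have h3 := hins (g.symm v₂) (by rw [e3]; exact hv₂V)
          have d12 : g.symm (P x) ≠ g.symm v := by
            intro h; exact hv2 (by rw [← e2, ← h, e1])
          have d13 : g.symm (P x) ≠ g.symm v₂ := by
            intro h; exact hv₂c (by rw [← e3, ← h, e1])
          have d23 : g.symm v ≠ g.symm v₂ := by
            intro h; exact hv₂v (by rw [← e3, ← h, e2])
          rcases h1 with h1 | h1 <;> rcases h2 with h2 | h2 <;> rcases h3 with h3 | h3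
          · exact d12 (h1.trans h2.symm)
          · exact d12 (h1.trans h2.symm)
          · exact d13 (h1.trans h3.symm)
          · exact d23 (h2.trans h3.symm)
          · exact d23 (h2.trans h3.symm)
          · exact d13 (h1.trans h3.symm)
          · exact d12 (h1.trans h2.symm)
          · exact d12 (h1.trans h2.symm)
        · -- w ↦ w : cover of comp {t}
          rw [Set.mem_singleton_iff] at hzw
          subst hzw
          have hcovt : ∀ r, r ≠ t → g r ∈ V r := by
            intro r hrt
            obtain ⟨j, hj⟩ := Fin.exists_succAbove_eq hrt
            rw [← hj]; exact hwz j
          have hgt : g t ∉ V t := by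
            intro h
            exact hnomar ⟨g, hgG, fun i => by
              by_cases hi : i = t
              · rwa [hi]
              · exact hcovt i hi⟩
          have hgtP : g t = P t := hPA t hAt _ hgt
          obtain ⟨zu, hzumem, huz⟩ := hg u (Set.mem_insert _ _)
          rcases Set.mem_insert_iff.mp hzumem with hzu | hzu
          · -- u ↦ u
            subst hzu
            have h1 := huz slot
            rw [hu_slot] at h1
            exact hgt h1
          · -- u ↦ w
            rw [Set.mem_singleton_iff] at hzu
            subst hzu
            have hgxall : ∀ r, r ≠ t → r ≠ q → g x ∈ V r := by
              intro r h1 h2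
              obtain ⟨j, hj⟩ := Fin.exists_succAbove_eq h1
              have hjne : j ≠ slot := by
                intro hh
                rw [hh] at hj
                rw [hslot] at hj
                exact h2 hj.symm
              have h4 := huz j
              rwa [hu_ne j hjne, hj] at h4
            obtain ⟨x₁, hx₁⟩ := Psurj (g x)
            by_cases hx₁t : x₁ = t
            · rw [hx₁t, ← hgtP] at hx₁
              exact htx (g.injective hx₁)
            · by_cases hx₁q : x₁ = q
              · rw [hx₁q, hq] at hx₁
                have h5 : g x ∈ V x := hgxall x htx.symm (fun h => hqx h.symm)
                rw [← hx₁] at h5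
                exact hv1 h5
              · have h5 : g x ∈ V x₁ := hgxall x₁ hx₁t hx₁q
                rw [← hx₁] at h5
                exact hP1 x₁ h5
      · -- all singleton-indices equal q: v is missing from every `V r`
        push_neg at ht
        have hvall : ∀ r : Fin (m+2), v ∉ V r := by
          intro r
          by_cases hAr : ∃ aa, aa ∉ V r ∧ ∀ w, w ∉ V r → w = aa
          · have hrq : r = q := ht r hAr
            rw [hrq]; exact hvVq
          · by_cases hrx : r = x
            · rw [hrx]; exact hv1
            · have hsec : ∃ w, w ∉ V r ∧ w ≠ P r := by
                by_contra hno
                push_neg at hno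
                exact hAr ⟨P r, hP1 r, hno⟩
              obtain ⟨vr, hvr1, hvr2⟩ := hsec
              obtain ⟨x₂, hx₂⟩ := Psurj vr
              have hAx₂ : ∃ aa, aa ∉ V x₂ ∧ ∀ w, w ∉ V x₂ → w = aa := by
                by_contra h
                by_cases hx₂r : x₂ = r
                · rw [hx₂r] at hx₂
                  exact hvr2 hx₂.symm
                · have h2 : P x₂ ∈ V r := hPD x₂ h r (fun hh => hx₂r hh.symm)
                  rw [hx₂] at h2
                  exact hvr1 h2
              have hx₂q : x₂ = q := ht x₂ hAx₂
              rw [hx₂q, hq] at hx₂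
              rw [hx₂]
              exact hvr1
        obtain ⟨g, hgG, hg⟩ := horb (Set.range (fun w : Fin (m+2) => (fun _ : Fin (m+1) => w)))
          ⟨_, ⟨x, rfl⟩⟩
        obtain ⟨z, hz, hcond⟩ := hg (fun _ => g.symm v) ⟨g.symm v, rfl⟩
        obtain ⟨w', rfl⟩ := hz
        have h1 := hcond 0
        exact hvall w' (by simpa using h1)
  -- assemble the bijection
  choose a ha1 ha2 using KEY
  have hainj : Function.Injective a := by
    intro x x' h
    by_contra hne
    exact pair x x' (a x) hne ⟨ha1 x, ha2 x⟩ (h ▸ ⟨ha1 x', ha2 x'⟩)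
  refine ⟨a, Finite.injective_iff_bijective.mp hainj, fun i => ?_⟩
  ext w
  simp only [Set.mem_diff, Set.mem_univ, Set.mem_singleton_iff, true_and]
  constructor
  · intro hw he
    exact ha1 i (he ▸ hw)
  · intro hne
    by_contra h
    exact hne (ha2 i w h)

/-- If `G` satisfies the `(n-1)`-orbit condition subject to `V` but has no `G`-marriage
subject to `V`, then there are `a₁, …, aₙ` forming a bijection of `[n]` with
`V i = [n] \ {a i}` for each `i`. -/
theorem stmt_13 (n : ℕ) (G : Subgroup (Equiv.Perm (Fin n))) (V : Fin n → Set (Fin n))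
    (horb : kOrbitCondition (n - 1) G V) (hnomar : ¬ hasMarriage G V) :
    ∃ a : Fin n → Fin n, Function.Bijective a ∧
      ∀ i, V i = Set.univ \ {a i} := by
  match n, G, V, horb, hnomar with
  | 0, G, V, horb, hnomar =>
    exact absurd ⟨1, G.one_mem, fun i => i.elim0⟩ hnomar
  | 1, G, V, horb, hnomar =>
    refine ⟨id, Function.bijective_id, fun i => ?_⟩
    have h1 : ¬ ∀ j, (1 : Equiv.Perm (Fin 1)) j ∈ V j := fun h => hnomar ⟨1, G.one_mem, h⟩
    have hi : i ∉ V i := by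
      intro h
      exact h1 (fun j => by
        have hji : j = i := Subsingleton.elim j i
        simpa [hji] using h)
    ext w
    have hwi : w = i := Subsingleton.elim w i
    simp only [Set.mem_diff, Set.mem_univ, Set.mem_singleton_iff, true_and, id]
    constructor
    · intro hw
      exact absurd (hwi ▸ hw) hi
    · intro hne
      exact absurd hwi hne
  | (m + 2), G, V, horb, hnomar =>
    exact stmt13_aux m G V horb hnomar
end
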